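/- arXiv:2605.21539 — 2 statements merged into one kernel-verified Lean document; each statement's English description precedes it below -/
import Mathlib

section
/- Let 0 < β < 1, let F_f, F_r be positive integers, and let m, n ∈ [-1,1], G ≥ 0. Suppose X_{Δf} satisfies X_{Δf} = β^{F_f} X_{Δf} + (1-β) F_f β^{F_f-1} (mG - X_B), where X_B = ((β^{F_r}(1-β^{F_f}) m + (1-β^{F_r}) n)/(1-β^{F_f+F_r})) G. Then X_{Δf} = (F_f β^{F_f-1}(1-β)(1-β^{F_r}) / ((1-β^{F_f})(1-β^{F_f+F_r}))) · (m-n) · G. -/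
/-!
A stationary affine recursion `x = a x + b` with `a ≠ 1` has the unique solution `x = b / (1 - a)`.
The base state `X_B` is a weighted average of `m G` and `n G` with weight `(1 - β^{F_r}) / (1 - β^{F_f + F_r})`
on `n G`, so the forcing term `m G - X_B` is that weight times `(m - n) G`.
-/

lemma eq_div_one_sub_of_eq_mul_add {K : Type*} [Field K] {a b x : K} (ha : a ≠ 1)
    (h : x = a * x + b) : x = b / (1 - a) := by
  rw [eq_div_iff (sub_ne_zero.mpr ha.symm)]
  linear_combination h

lemma mul_sub_weighted_avg_mul {K : Type*} [Field K] (p q m n G : K) (hpq : 1 - p * q ≠ 0) :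
    m * G - ((q * (1 - p) * m + (1 - q) * n) / (1 - p * q)) * G
      = (1 - q) / (1 - p * q) * (m - n) * G := by
  rw [div_mul_eq_mul_div, sub_div' hpq, div_mul_eq_mul_div, div_mul_eq_mul_div]
  congr 1
  ring

theorem stmt_5_general (β : ℝ) (hβ0 : 0 < β) (hβ1 : β < 1)
    (Ff Fr : ℕ) (hFf : 0 < Ff)
    (m n G : ℝ)
    (XB XΔf : ℝ)
    (hXB : XB = ((β ^ Fr * (1 - β ^ Ff) * m + (1 - β ^ Fr) * n) / (1 - β ^ (Ff + Fr))) * G)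
    (hXΔf : XΔf = β ^ Ff * XΔf + (1 - β) * Ff * β ^ (Ff - 1) * (m * G - XB)) :
    XΔf = (Ff * β ^ (Ff - 1) * (1 - β) * (1 - β ^ Fr) /
      ((1 - β ^ Ff) * (1 - β ^ (Ff + Fr)))) * (m - n) * G := by
  have hpow_Ff : β ^ Ff < 1 := pow_lt_one₀ hβ0.le hβ1 hFf.ne'
  have hpow_sum : β ^ (Ff + Fr) < 1 := pow_lt_one₀ hβ0.le hβ1 (by omega)
  have hgap : m * G - XB = (1 - β ^ Fr) / (1 - β ^ (Ff + Fr)) * (m - n) * G := by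
    rw [hXB, pow_add]
    exact mul_sub_weighted_avg_mul _ _ m n G (by rw [← pow_add]; linarith)
  rw [hgap] at hXΔf
  rw [eq_div_one_sub_of_eq_mul_add hpow_Ff.ne hXΔf]
  field_simp [(by linarith : 1 - β ^ Ff ≠ 0), (by linarith : 1 - β ^ (Ff + Fr) ≠ 0)]

theorem stmt_5 (β : ℝ) (hβ0 : 0 < β) (hβ1 : β < 1)
    (Ff Fr : ℕ) (hFf : 0 < Ff) (hFr : 0 < Fr)
    (m n G : ℝ) (hm : m ∈ Set.Icc (-1 : ℝ) 1) (hn : n ∈ Set.Icc (-1 : ℝ) 1) (hG : 0 ≤ G)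
    (XB XΔf : ℝ)
    (hXB : XB = ((β ^ Fr * (1 - β ^ Ff) * m + (1 - β ^ Fr) * n) / (1 - β ^ (Ff + Fr))) * G)
    (hXΔf : XΔf = β ^ Ff * XΔf + (1 - β) * Ff * β ^ (Ff - 1) * (m * G - XB)) :
    XΔf = (Ff * β ^ (Ff - 1) * (1 - β) * (1 - β ^ Fr) /
      ((1 - β ^ Ff) * (1 - β ^ (Ff + Fr)))) * (m - n) * G :=
  stmt_5_general β hβ0 hβ1 Ff Fr hFf m n G XB XΔf hXB hXΔf
end

section
/- Let 0 ≤ β < 1 and let F_f, F_r be positive integers. Define a periodic sequence of means μ_t where μ_t = a for t in the first F_f positions of each period of length F_f+F_r and μ_t = b otherwise. Define B_t = β B_{t-1} + (1-β) μ_t with B_0 = 0. Then the subsequence B_{(F_f+F_r)T} converges, and its limit is (β^{F_r}(1-β^{F_f}) a + (1-β^{F_r}) b)/(1-β^{F_f+F_r}). -/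
/-!
Over one period of length `P = Ff + Fr` the average first runs `Ff` steps with constant input `a`
and then `Fr` steps with constant input `b`; each constant run acts affinely, so the values at
period endpoints satisfy `x (T + 1) = β ^ P * x T + c` with the numerator `c` of the claimed limit.
Since `0 ≤ β ^ P < 1`, this affine recurrence converges to its fixed point `c / (1 - β ^ P)`.
-/

open Filter Topology

lemma ema_add_of_const (β c : ℝ) (B : ℕ → ℝ) (n m : ℕ)
    (hB : ∀ k < m, B (n + k + 1) = β * B (n + k) + (1 - β) * c) :
    B (n + m) = β ^ m * B n + (1 - β ^ m) * c := by
  induction m with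
  | zero => simp
  | succ m ih =>
    rw [← add_assoc, hB m m.lt_succ_self, ih fun k hk => hB k (hk.trans m.lt_succ_self)]
    ring

lemma tendsto_of_affine_recurrence {q c : ℝ} (hq : |q| < 1) {x : ℕ → ℝ}
    (hx : ∀ T, x (T + 1) = q * x T + c) :
    Tendsto x atTop (𝓝 (c / (1 - q))) := by
  have h1q : 1 - q ≠ 0 := by linarith [le_abs_self q]
  have hclosed : ∀ T, x T = c / (1 - q) + q ^ T * (x 0 - c / (1 - q)) := by
    intro T
    induction T with
    | zero => simp
    | succ T ih =>
      rw [hx, ih, pow_succ]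
      field_simp
      ring
  have hpow : Tendsto (fun T => q ^ T) atTop (𝓝 0) := tendsto_pow_atTop_nhds_zero_of_abs_lt_one hq
  simpa [← funext hclosed] using (hpow.mul_const (x 0 - c / (1 - q))).const_add (c / (1 - q))

lemma ema_periodic_step (β : ℝ) (Ff Fr : ℕ) (a b : ℝ) (μ : ℕ → ℝ)
    (hμ : ∀ t : ℕ, 1 ≤ t → μ t = if (t - 1) % (Ff + Fr) < Ff then a else b)
    (B : ℕ → ℝ) (hB : ∀ t : ℕ, 1 ≤ t → B t = β * B (t - 1) + (1 - β) * μ t) (T : ℕ) :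
    B ((Ff + Fr) * (T + 1)) = β ^ (Ff + Fr) * B ((Ff + Fr) * T)
      + (β ^ Fr * (1 - β ^ Ff) * a + (1 - β ^ Fr) * b) := by
  set n := (Ff + Fr) * T
  have hstep : ∀ s, B (s + 1) = β * B s + (1 - β) * μ (s + 1) := fun s => hB (s + 1) le_add_self
  have hphase : ∀ s, μ (n + s + 1) = if s % (Ff + Fr) < Ff then a else b := by
    intro s
    rw [hμ _ le_add_self, Nat.add_sub_cancel, add_comm n, Nat.add_mul_mod_self_left]
  have hforget : B (n + Ff) = β ^ Ff * B n + (1 - β ^ Ff) * a := by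
    refine ema_add_of_const β a B n Ff fun k hk => ?_
    rw [hstep, hphase, Nat.mod_eq_of_lt (by omega), if_pos hk]
  have hretain : B (n + Ff + Fr) = β ^ Fr * B (n + Ff) + (1 - β ^ Fr) * b := by
    refine ema_add_of_const β b B (n + Ff) Fr fun k hk => ?_
    rw [hstep, add_assoc n, hphase, Nat.mod_eq_of_lt (by omega), if_neg (by omega)]
  rw [show (Ff + Fr) * (T + 1) = n + Ff + Fr by ring, hretain, hforget, pow_add]
  ring

theorem stmt_18_general (β : ℝ) (hβ0 : 0 ≤ β) (hβ1 : β < 1)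
    (Ff Fr : ℕ) (hFf : 0 < Ff) (a b : ℝ)
    (μ : ℕ → ℝ)
    (hμ : ∀ t : ℕ, 1 ≤ t → μ t = if (t - 1) % (Ff + Fr) < Ff then a else b)
    (B : ℕ → ℝ)
    (hB : ∀ t : ℕ, 1 ≤ t → B t = β * B (t - 1) + (1 - β) * μ t) :
    Filter.Tendsto (fun T : ℕ => B ((Ff + Fr) * T)) Filter.atTop
      (nhds ((β ^ Fr * (1 - β ^ Ff) * a + (1 - β ^ Fr) * b) / (1 - β ^ (Ff + Fr)))) := by
  have hq : |β ^ (Ff + Fr)| < 1 := by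
    rw [abs_of_nonneg (pow_nonneg hβ0 _)]
    exact pow_lt_one₀ hβ0 hβ1 (by omega)
  exact tendsto_of_affine_recurrence hq (ema_periodic_step β Ff Fr a b μ hμ B hB)

theorem stmt_18 (β : ℝ) (hβ0 : 0 ≤ β) (hβ1 : β < 1)
    (Ff Fr : ℕ) (hFf : 0 < Ff) (hFr : 0 < Fr) (a b : ℝ)
    (μ : ℕ → ℝ)
    (hμ : ∀ t : ℕ, 1 ≤ t → μ t = if (t - 1) % (Ff + Fr) < Ff then a else b)
    (B : ℕ → ℝ) (hB0 : B 0 = 0)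
    (hB : ∀ t : ℕ, 1 ≤ t → B t = β * B (t - 1) + (1 - β) * μ t) :
    Filter.Tendsto (fun T : ℕ => B ((Ff + Fr) * T)) Filter.atTop
      (nhds ((β ^ Fr * (1 - β ^ Ff) * a + (1 - β ^ Fr) * b) / (1 - β ^ (Ff + Fr)))) :=
  stmt_18_general β hβ0 hβ1 Ff Fr hFf a b μ hμ B hB
end
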